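/- Let G be a group generated by a finite set S, with word metric d, and let H ≤ G be a subgroup. Suppose H has the following superlinear divergence property: for every L ≥ 0 there exists K ≥ 0 such that for all h₁, h₂ ∈ H, all r₁, r₂ with 0 < r₁ < r₂ < d(h₁,h₂), and every 1-Lipschitz discrete path α from h₁ to h₂ whose image is disjoint from the closed K-neighbourhood of A(h₁,r₁,r₂) = {h ∈ H : r₁ ≤ d(h₁,h) ≤ r₂}, one has l(α) ≥ L(r₂ − r₁). Then for all μ ≥ 1 and c ≥ 0 there exists C ≥ 0 such that every (μ,c)-quasi-geodesic in (G,d) whose endpoints lie in H is contained in the closed C-neighbourhood of H. -/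

import Mathlib

/-- The word metric on a group `G` with respect to a generating set `Y`:
`wordDist Y g h` is the least length of a word in `Y ∪ Y⁻¹` representing `g⁻¹ * h`. -/
noncomputable def wordDist {G : Type*} [Group G] (Y : Set G) (g h : G) : ℕ :=
  sInf {n : ℕ | ∃ w : List G, w.length = n ∧ (∀ t ∈ w, t ∈ Y ∪ Y⁻¹) ∧ w.prod = g⁻¹ * h}

/-!
Let `q` be a `(μ, c)`-quasi-geodesic with endpoints in `H` and `s` a time. Take the last time
`a ≤ s` and the first time `b ≥ s` at which `q` is `B`-close to `H`, say to `h₁` and `h₂`, where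
`B = K + μ + c`. Geodesic words from `h₁` to `q a`, from each `q i` to `q (i + 1)` and from `q b`
to `h₂` spell a `1`-Lipschitz path of length at most `2B + (μ + c)(b - a)`. Near its start and
end it only meets points of `H` close to `h₁` or to `h₂`, and in between it stays `K`-far from `H`
altogether, so it avoids the `K`-neighbourhood of an annulus about `h₁` of width
`d(h₁, h₂) - const ≥ (b - a)/μ - const`. Divergence at rate `L = 2μ(μ + c)` therefore bounds
`b - a`, hence `d(q s, h₁)`. Quasi-geodesics on real intervals reduce to integer ones by sampling
at integer times, at the cost of replacing `c` by `c + 1`.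
-/

section WordMetric

variable {G : Type*} [Group G] {Y : Set G}

local notation "δ(" x ", " y ")" => (wordDist Y x y : ℝ)

theorem wordDist_le_length {g h : G} {w : List G} (hw : ∀ t ∈ w, t ∈ Y ∪ Y⁻¹)
    (hwh : w.prod = g⁻¹ * h) : wordDist Y g h ≤ w.length :=
  Nat.sInf_le ⟨w, rfl, hw, hwh⟩

theorem wordDist_mul_prod_le (g : G) {w : List G} (hw : ∀ t ∈ w, t ∈ Y ∪ Y⁻¹) :
    wordDist Y g (g * w.prod) ≤ w.length :=
  wordDist_le_length hw (by group)

theorem wordDist_self (g : G) : wordDist Y g g = 0 :=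
  Nat.le_zero.mp (wordDist_le_length (w := []) (by simp) (by simp))

theorem exists_word_length_eq_wordDist (hY : Subgroup.closure Y = ⊤) (g h : G) :
    ∃ w : List G, (∀ t ∈ w, t ∈ Y ∪ Y⁻¹) ∧ w.prod = g⁻¹ * h ∧ w.length = wordDist Y g h := by
  have hmem : g⁻¹ * h ∈ Submonoid.closure (Y ∪ Y⁻¹) := by
    rw [← Subgroup.closure_toSubmonoid, hY]
    trivial
  obtain ⟨w, hw, hwh⟩ := Submonoid.exists_list_of_mem_closure hmem
  obtain ⟨v, hvl, hv, hvh⟩ := Nat.sInf_mem (s := {n : ℕ | ∃ w : List G, w.length = n ∧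
    (∀ t ∈ w, t ∈ Y ∪ Y⁻¹) ∧ w.prod = g⁻¹ * h}) ⟨_, w, rfl, hw, hwh⟩
  exact ⟨v, hv, hvh, hvl⟩

theorem wordDist_comm (hY : Subgroup.closure Y = ⊤) (g h : G) :
    wordDist Y g h = wordDist Y h g := by
  suffices key : ∀ g h : G, wordDist Y h g ≤ wordDist Y g h from le_antisymm (key h g) (key g h)
  intro g h
  obtain ⟨w, hw, hwh, hwl⟩ := exists_word_length_eq_wordDist hY g h
  rw [← hwl, ← List.length_map (f := (·⁻¹)), ← List.length_reverse]
  refine wordDist_le_length (fun t ht => ?_) (by rw [← List.prod_inv_reverse, hwh]; group)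
  obtain ⟨u, hu, rfl⟩ := List.mem_map.mp (List.mem_reverse.mp ht)
  simpa [or_comm] using hw u hu

theorem wordDist_triangle (hY : Subgroup.closure Y = ⊤) (g h k : G) :
    δ(g, k) ≤ δ(g, h) + δ(h, k) := by
  obtain ⟨u, hu, huh, hul⟩ := exists_word_length_eq_wordDist hY g h
  obtain ⟨v, hv, hvh, hvl⟩ := exists_word_length_eq_wordDist hY h k
  rw [← hul, ← hvl]
  exact_mod_cast (List.length_append (as := u) (bs := v)) ▸ wordDist_le_length
    (by simpa only [List.mem_append] using fun t ht => ht.elim (hu t) (hv t))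
    (by rw [List.prod_append, huh, hvh]; group)

def wordPath (g : G) (w : List G) (j : ℤ) : G :=
  g * (w.take j.toNat).prod

@[simp]
theorem wordPath_zero (g : G) (w : List G) : wordPath g w 0 = g := by
  simp [wordPath]

@[simp]
theorem wordPath_length (g : G) (w : List G) : wordPath g w w.length = g * w.prod := by
  simp [wordPath]

theorem wordPath_append (g : G) (w v : List G) (j : ℤ) :
    wordPath g (w ++ v) j = wordPath g w j * (v.take (j.toNat - w.length)).prod := by
  simp [wordPath, List.take_append, mul_assoc]

theorem wordDist_wordPath_le_length {w : List G} (hw : ∀ t ∈ w, t ∈ Y ∪ Y⁻¹) (g : G) (j : ℤ) :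
    wordDist Y g (wordPath g w j) ≤ w.length :=
  (wordDist_mul_prod_le g fun t ht => hw t (List.mem_of_mem_take ht)).trans
    (List.length_take_le' _ _)

theorem wordDist_wordPath_succ_le_one {w : List G} (hw : ∀ t ∈ w, t ∈ Y ∪ Y⁻¹) (g : G)
    {j : ℤ} (hj : 0 ≤ j) : wordDist Y (wordPath g w j) (wordPath g w (j + 1)) ≤ 1 := by
  rw [wordPath, wordPath, show (j + 1).toNat = j.toNat + 1 by omega, List.take_add,
    List.prod_append, ← mul_assoc]
  exact (wordDist_mul_prod_le _ fun t ht =>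
    hw t (List.mem_of_mem_drop (List.mem_of_mem_take ht))).trans (List.length_take_le _ _)

theorem sum_wordDist_wordPath_le {w : List G} (hw : ∀ t ∈ w, t ∈ Y ∪ Y⁻¹) (g : G) :
    ∑ i ∈ Finset.Ico 0 (w.length : ℤ), δ(wordPath g w i, wordPath g w (i + 1)) ≤ w.length := by
  have hcard : (Finset.Ico 0 (w.length : ℤ)).card = w.length := by simp
  simpa [hcard] using Finset.sum_le_card_nsmul (Finset.Ico 0 (w.length : ℤ))
    (fun i => δ(wordPath g w i, wordPath g w (i + 1))) 1 fun i hi =>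
      Nat.cast_le_one.mpr (wordDist_wordPath_succ_le_one hw g (Finset.mem_Ico.mp hi).1)

theorem exists_word_through_points (hY : Subgroup.closure Y = ⊤) (p : ℤ → G) {m n : ℤ}
    (hmn : m < n) :
    ∃ w : List G, (∀ t ∈ w, t ∈ Y ∪ Y⁻¹) ∧ w.prod = (p m)⁻¹ * p n ∧
      w.length = ∑ i ∈ Finset.Ico m n, wordDist Y (p i) (p (i + 1)) ∧
      ∀ j, ∃ i ∈ Finset.Ico m n,
        wordDist Y (p i) (wordPath (p m) w j) ≤ wordDist Y (p i) (p (i + 1)) := by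
  induction n, hmn using Int.leInduction with
  | base =>
    obtain ⟨w, hw, hwp, hwl⟩ := exists_word_length_eq_wordDist hY (p m) (p (m + 1))
    refine ⟨w, hw, hwp, by simp [hwl, Finset.Ico_add_one_right_eq_Icc], fun j => ⟨m, by simp, ?_⟩⟩
    exact hwl ▸ wordDist_wordPath_le_length hw (p m) j
  | succ n hmn ih =>
    obtain ⟨w, hw, hwp, hwl, hwj⟩ := ih
    obtain ⟨v, hv, hvp, hvl⟩ := exists_word_length_eq_wordDist hY (p n) (p (n + 1))
    refine ⟨w ++ v, ?_, ?_, ?_, fun j => ?_⟩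
    · simpa only [List.mem_append] using fun t ht => ht.elim (hw t) (hv t)
    · rw [List.prod_append, hwp, hvp]
      group
    · rw [List.length_append, hwl, hvl, ← Finset.insert_Ico_right_eq_Ico_add_one (by omega),
        Finset.sum_insert Finset.right_notMem_Ico, add_comm]
    rcases le_or_gt j.toNat w.length with hj | hj
    · obtain ⟨i, hi, hij⟩ := hwj j
      refine ⟨i, Finset.Ico_subset_Ico_right (by omega) hi, ?_⟩
      rwa [wordPath_append, Nat.sub_eq_zero_of_le hj, List.take_zero, List.prod_nil, mul_one]
    · refine ⟨n, Finset.mem_Ico.mpr ⟨by omega, by omega⟩, hvl ▸ ?_⟩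
      have hpn : wordPath (p m) w j = p n := by
        rw [wordPath, List.take_of_length_le hj.le, hwp]
        group
      rw [wordPath_append, hpn]
      exact (wordDist_mul_prod_le _ fun t ht => hv t (List.mem_of_mem_take ht)).trans
        (List.length_take_le' _ _)

end WordMetric

theorem Int.exists_bracket {P : ℤ → Prop} {m s n : ℤ} (hms : m ≤ s) (hsn : s ≤ n) (hm : P m)
    (hn : P n) :
    ∃ a b, m ≤ a ∧ a ≤ s ∧ s ≤ b ∧ b ≤ n ∧ P a ∧ P b ∧ ∀ i, a < i → i < b → ¬ P i := by
  obtain ⟨a, ⟨has, ha⟩, hamax⟩ :=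
    Int.exists_greatest_of_bdd (P := fun i => i ≤ s ∧ P i) ⟨s, fun i hi => hi.1⟩ ⟨m, hms, hm⟩
  obtain ⟨b, ⟨hsb, hb⟩, hbmin⟩ :=
    Int.exists_least_of_bdd (P := fun i => s ≤ i ∧ P i) ⟨s, fun i hi => hi.1⟩ ⟨n, hsn, hn⟩
  refine ⟨a, b, hamax m ⟨hms, hm⟩, has, hsb, hbmin n ⟨hsn, hn⟩, ha, hb, fun i hai hib hi => ?_⟩
  rcases le_total i s with his | hsi
  · exact (hamax i ⟨his, hi⟩).not_gt hai
  · exact (hbmin i ⟨hsi, hi⟩).not_gt hib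

section Splice

variable {α : Type*} {x y : α} {q : ℤ → α} {a b i : ℤ}

def splice (x y : α) (q : ℤ → α) (a b : ℤ) (i : ℤ) : α :=
  if i < a then x else if i ≤ b then q i else y

theorem splice_of_lt (hi : i < a) : splice x y q a b i = x :=
  if_pos hi

theorem splice_of_mem (hai : a ≤ i) (hib : i ≤ b) : splice x y q a b i = q i := by
  rw [splice, if_neg hai.not_gt, if_pos hib]

theorem splice_of_gt (hab : a ≤ b) (hi : b < i) : splice x y q a b i = y := by
  rw [splice, if_neg (by omega), if_neg hi.not_ge]

end Splice

section QuasiGeodesic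

variable {G : Type*} [Group G] {Y : Set G} {H : Subgroup G}

def DivergesAtRate (Y : Set G) (H : Subgroup G) (L K : ℝ) : Prop :=
  ∀ h₁ ∈ H, ∀ h₂ ∈ H, ∀ r₁ r₂ : ℝ, 0 < r₁ → r₁ < r₂ → r₂ < (wordDist Y h₁ h₂ : ℝ) →
    ∀ (m n : ℤ), m ≤ n → ∀ α : ℤ → G, α m = h₁ → α n = h₂ →
      (∀ i : ℤ, m ≤ i → i < n → (wordDist Y (α i) (α (i + 1)) : ℝ) ≤ 1) →
      (∀ i : ℤ, m ≤ i → i ≤ n → ∀ h ∈ H,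
        r₁ ≤ (wordDist Y h₁ h : ℝ) → (wordDist Y h₁ h : ℝ) ≤ r₂ → ¬ (wordDist Y (α i) h : ℝ) ≤ K) →
      L * (r₂ - r₁) ≤ ∑ i ∈ Finset.Ico m n, (wordDist Y (α i) (α (i + 1)) : ℝ)

def IsQuasiGeodesicOn {ι : Type*} [Dist ι] (Y : Set G) (μ c : ℝ) (q : ι → G) (I : Set ι) :
    Prop :=
  ∀ s ∈ I, ∀ t ∈ I, dist s t / μ - c ≤ (wordDist Y (q s) (q t) : ℝ) ∧
    (wordDist Y (q s) (q t) : ℝ) ≤ μ * dist s t + c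

local notation "δ(" x ", " y ")" => (wordDist Y x y : ℝ)

variable {q : ℤ → G} {h₁ h₂ : G} {a b : ℤ} {K ℓ B : ℝ}

theorem sum_wordDist_splice_le (hY : Subgroup.closure Y = ⊤) (hab : a ≤ b)
    (hstep : ∀ i, a ≤ i → i < b → δ(q i, q (i + 1)) ≤ ℓ)
    (ha : δ(q a, h₁) ≤ B) (hb : δ(q b, h₂) ≤ B) :
    ∑ i ∈ Finset.Ico (a - 1) (b + 1),
      δ(splice h₁ h₂ q a b i, splice h₁ h₂ q a b (i + 1)) ≤ 2 * B + (b - a) * ℓ := by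
  rw [← Finset.insert_Ico_left_eq_Ico_sub_one (by omega),
    ← Finset.insert_Ico_right_eq_Ico_add_one hab, Finset.sum_insert (by simp; omega),
    Finset.sum_insert Finset.right_notMem_Ico, sub_add_cancel, splice_of_lt (by omega),
    splice_of_mem le_rfl hab, splice_of_mem hab le_rfl, splice_of_gt hab (by omega),
    wordDist_comm hY h₁]
  have hmid : ∑ i ∈ Finset.Ico a b, δ(splice h₁ h₂ q a b i, splice h₁ h₂ q a b (i + 1)) ≤
      (b - a) * ℓ := by
    have hcard : ((Finset.Ico a b).card : ℝ) = b - a := by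
      rw [Int.card_Ico, ← Int.cast_natCast, Int.toNat_of_nonneg (by omega), Int.cast_sub]
    refine (Finset.sum_le_card_nsmul _ _ ℓ fun i hi => ?_).trans_eq (by rw [nsmul_eq_mul, hcard])
    obtain ⟨hai, hib⟩ := Finset.mem_Ico.mp hi
    rw [splice_of_mem hai hib.le, splice_of_mem (by omega) hib]
    exact hstep i hai hib
  linarith

theorem notMem_annulus_of_near_splice (hY : Subgroup.closure Y = ⊤) (hab : a ≤ b) (hℓB : ℓ ≤ B)
    (hstep : ∀ i, a ≤ i → i < b → δ(q i, q (i + 1)) ≤ ℓ)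
    (hfar : ∀ i, a < i → i < b → ∀ h ∈ H, K + ℓ < δ(q i, h))
    (ha : δ(q a, h₁) ≤ B) (hb : δ(q b, h₂) ≤ B) {i : ℤ} (hi : i ∈ Finset.Ico (a - 1) (b + 1))
    {x : G} (hx : δ(splice h₁ h₂ q a b i, x) ≤
      δ(splice h₁ h₂ q a b i, splice h₁ h₂ q a b (i + 1)))
    {h : G} (hh : h ∈ H) (hxh : δ(x, h) ≤ K) :
    δ(h₁, h) < K + 2 * B + 1 ∨ δ(h₁, h₂) - (K + 2 * B + 1) < δ(h₁, h) := by
  have htri := wordDist_triangle hY (Y := Y)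
  obtain ⟨hlo, hhi⟩ := Finset.mem_Ico.mp hi
  rcases (show i = a - 1 ∨ a ≤ i ∧ i < b ∨ i = b by omega) with rfl | ⟨hai, hib⟩ | rfl
  · rw [splice_of_lt (by omega), sub_add_cancel, splice_of_mem le_rfl hab,
      wordDist_comm hY h₁ (q a)] at hx
    left
    linarith [htri h₁ x h]
  · rw [splice_of_mem hai hib.le, splice_of_mem (by omega) hib] at hx
    have hxi : δ(q i, x) ≤ ℓ := hx.trans (hstep i hai hib)
    rcases hai.eq_or_lt with rfl | hai
    · left
      rw [wordDist_comm hY (q a)] at ha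
      linarith [htri h₁ (q a) h, htri (q a) x h]
    · linarith [hfar i hai hib h hh, htri (q i) x h]
  · rw [splice_of_mem hab le_rfl, splice_of_gt hab (by omega)] at hx
    have hhx : δ(h, x) ≤ K := by rwa [wordDist_comm hY]
    have hxb : δ(x, q i) ≤ B := by rw [wordDist_comm hY]; exact hx.trans hb
    right
    linarith [htri h₁ h h₂, htri h x h₂, htri x (q i) h₂]

theorem detour_bound (hY : Subgroup.closure Y = ⊤) {L : ℝ} (hL : 0 ≤ L) (hK : 0 ≤ K)
    (hdiv : DivergesAtRate Y H L K) (h₁H : h₁ ∈ H) (h₂H : h₂ ∈ H) (hab : a ≤ b) (hℓ : 0 ≤ ℓ)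
    (hℓB : ℓ ≤ B) (hstep : ∀ i, a ≤ i → i < b → δ(q i, q (i + 1)) ≤ ℓ)
    (hfar : ∀ i, a < i → i < b → ∀ h ∈ H, K + ℓ < δ(q i, h))
    (ha : δ(q a, h₁) ≤ B) (hb : δ(q b, h₂) ≤ B) :
    L * (δ(h₁, h₂) - 2 * (K + 2 * B + 1)) ≤ 2 * B + (b - a) * ℓ := by
  set r := K + 2 * B + 1
  have hr : 0 < r := by linarith
  have hba : 0 ≤ ((b : ℝ) - a) * ℓ := mul_nonneg (by rw [sub_nonneg]; exact_mod_cast hab) hℓ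
  rcases le_or_gt δ(h₁, h₂) (2 * r) with hD | hD
  · nlinarith [mul_nonpos_of_nonneg_of_nonpos hL (sub_nonpos.mpr hD)]
  obtain ⟨w, hw, hwp, hwl, hwj⟩ :=
    exists_word_through_points hY (splice h₁ h₂ q a b) (show a - 1 < b + 1 by omega)
  rw [splice_of_lt (by omega : a - 1 < a)] at hwp hwj
  rw [splice_of_gt hab (by omega : b < b + 1)] at hwp
  have hlen : (w.length : ℝ) ≤ 2 * B + (b - a) * ℓ := by
    rw [hwl]
    push_cast
    exact sum_wordDist_splice_le hY hab hstep ha hb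
  have hdetour := hdiv h₁ h₁H h₂ h₂H r (δ(h₁, h₂) - r) hr (by linarith) (by linarith) 0 w.length
    (by positivity) (wordPath h₁ w) (wordPath_zero h₁ w) (by rw [wordPath_length, hwp]; group)
    (fun i hi _ => Nat.cast_le_one.mpr (wordDist_wordPath_succ_le_one hw h₁ hi))
    (fun j _ _ h hh hr₁ hr₂ hK => by
      obtain ⟨i, hi, hij⟩ := hwj j
      rcases notMem_annulus_of_near_splice hY hab hℓB hstep hfar ha hb hi
        (by exact_mod_cast hij) hh hK with h | h <;> linarith)
  have hwidth : L * (δ(h₁, h₂) - 2 * r) = L * (δ(h₁, h₂) - r - r) := by ring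
  linarith [sum_wordDist_wordPath_le hw h₁]

theorem quasiconvex_int_of_divergesAtRate (hY : Subgroup.closure Y = ⊤)
    (hdiv : ∀ L : ℝ, 0 ≤ L → ∃ K : ℝ, 0 ≤ K ∧ DivergesAtRate Y H L K) {μ c : ℝ} (hμ : 1 ≤ μ)
    (hc : 0 ≤ c) :
    ∃ C : ℝ, 0 ≤ C ∧ ∀ (m n : ℤ) (q : ℤ → G), IsQuasiGeodesicOn Y μ c q (Set.Icc m n) →
      q m ∈ H → q n ∈ H → ∀ s ∈ Set.Icc m n, ∃ h ∈ H, δ(q s, h) ≤ C := by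
  set ℓ := μ + c
  -- `d(h₁, h₂) ≳ (b - a) / μ`, so rate `2μℓ` outgrows the length `ℓ (b - a)` of the detour
  obtain ⟨K, hK, hdivK⟩ := hdiv (2 * μ * ℓ) (by positivity)
  set B := K + ℓ
  set E := c + 2 * B + 2 * (K + 2 * B + 1)
  set T := 2 * B + 2 * μ * ℓ * E
  refine ⟨μ * T + c + B, by positivity, fun m n q hq hqm hqn s ⟨hms, hsn⟩ => ?_⟩
  have hnear : ∀ i, q i ∈ H → ∃ h ∈ H, δ(q i, h) ≤ B := fun i hi =>
    ⟨q i, hi, by rw [wordDist_self, Nat.cast_zero]; positivity⟩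
  obtain ⟨a, b, hma, has, hsb, hbn, ⟨h₁, h₁H, ha⟩, ⟨h₂, h₂H, hb⟩, hgap⟩ :=
    Int.exists_bracket (P := fun i => ∃ h ∈ H, δ(q i, h) ≤ B) hms hsn (hnear m hqm) (hnear n hqn)
  have hqab : ∀ i j, a ≤ i → i ≤ j → j ≤ b →
      (j - i) / μ - c ≤ δ(q i, q j) ∧ δ(q i, q j) ≤ μ * (j - i) + c := by
    intro i j hai hij hjb
    have hdist : dist i j = (j - i : ℝ) := by
      rw [Int.dist_eq, abs_sub_comm, abs_of_nonneg (by rw [sub_nonneg]; exact_mod_cast hij)]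
    exact hdist ▸ hq i ⟨by omega, by omega⟩ j ⟨by omega, by omega⟩
  have hstep : ∀ i, a ≤ i → i < b → δ(q i, q (i + 1)) ≤ ℓ := fun i hai hib => by
    simpa using (hqab i (i + 1) hai (by omega) hib).2
  have hfar : ∀ i, a < i → i < b → ∀ h ∈ H, K + ℓ < δ(q i, h) := fun i hai hib h hh =>
    not_le.mp fun hle => hgap i hai hib ⟨h, hh, hle⟩
  have hdetour := detour_bound hY (by positivity) hK hdivK h₁H h₂H (has.trans hsb)
    (by positivity) (le_add_of_nonneg_left hK) hstep hfar ha hb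
  have hab : (0 : ℝ) ≤ b - a := by rw [sub_nonneg]; exact_mod_cast has.trans hsb
  have htri := wordDist_triangle hY (Y := Y)
  have hD : (b - a) / μ - E ≤ δ(h₁, h₂) - 2 * (K + 2 * B + 1) := by
    rw [wordDist_comm hY (q b)] at hb
    linarith [(hqab a b le_rfl (has.trans hsb) le_rfl).1, htri (q a) h₁ (q b),
      htri h₁ h₂ (q b)]
  have hlen : ℓ * (b - a) ≤ 2 * B + 2 * μ * ℓ * E := by
    have := mul_le_mul_of_nonneg_left hD (by positivity : (0 : ℝ) ≤ 2 * μ * ℓ)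
    rw [mul_sub, show 2 * μ * ℓ * ((b - a) / μ) = 2 * ℓ * (b - a) by field_simp] at this
    linarith
  have hbaT : (b - a : ℝ) ≤ T := by nlinarith
  refine ⟨h₁, h₁H, ?_⟩
  have hsa := (hqab a s le_rfl has (by omega)).2
  have : μ * (s - a) ≤ μ * T := by
    gcongr
    linarith [show (s : ℝ) ≤ b by exact_mod_cast hsb]
  rw [wordDist_comm hY] at hsa
  linarith [htri (q s) (q a) h₁]

theorem abs_sub_le_abs_min_sub_min_add_one {x y b : ℝ} (hx : x ≤ b + 1) (hy : y ≤ b + 1) :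
    |x - y| ≤ |min x b - min y b| + 1 := by
  have h₁ := le_abs_self (min x b - min y b)
  have h₂ := neg_abs_le (min x b - min y b)
  rw [abs_sub_le_iff]
  constructor <;> rcases min_cases x b with ⟨hx', _⟩ | ⟨hx', _⟩ <;>
    rcases min_cases y b with ⟨hy', _⟩ | ⟨hy', _⟩ <;> linarith

theorem IsQuasiGeodesicOn.exists_int_sample {q : ℝ → G} {μ c a b : ℝ} (hμ : 1 ≤ μ) (hab : a ≤ b)
    (hq : IsQuasiGeodesicOn Y μ c q (Set.Icc a b)) :
    ∃ (n : ℤ) (p : ℤ → G), IsQuasiGeodesicOn Y μ (c + 1) p (Set.Icc 0 n) ∧ p 0 = q a ∧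
      p n = q b ∧ ∀ s ∈ Set.Icc a b, ∃ i ∈ Set.Icc 0 n, δ(q s, p i) ≤ μ + c := by
  set σ : ℤ → ℝ := fun i => min (a + i) b
  have hceil : b - a ≤ ⌈b - a⌉ ∧ (⌈b - a⌉ : ℝ) < b - a + 1 := ⟨Int.le_ceil _, Int.ceil_lt_add_one _⟩
  have hσ : ∀ i ∈ Set.Icc 0 ⌈b - a⌉, σ i ∈ Set.Icc a b := fun i ⟨hi, _⟩ =>
    ⟨le_min (by linarith [(Int.cast_nonneg (R := ℝ) hi)]) hab, min_le_right _ _⟩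
  have hσdist : ∀ i ∈ Set.Icc 0 ⌈b - a⌉, ∀ j ∈ Set.Icc 0 ⌈b - a⌉,
      dist i j - 1 ≤ dist (σ i) (σ j) ∧ dist (σ i) (σ j) ≤ dist i j := by
    intro i ⟨_, hi⟩ j ⟨_, hj⟩
    have hi' : (i : ℝ) ≤ ⌈b - a⌉ := by exact_mod_cast hi
    have hj' : (j : ℝ) ≤ ⌈b - a⌉ := by exact_mod_cast hj
    have hlip := abs_min_sub_min_le_max (a + i) b (a + j) b
    have hcoarse := abs_sub_le_abs_min_sub_min_add_one (x := a + i) (y := a + j) (b := b)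
      (by linarith) (by linarith)
    simp only [Int.dist_eq, Real.dist_eq, σ, sub_self, abs_zero, add_sub_add_left_eq_sub] at *
    exact ⟨by linarith, hlip.trans_eq (max_eq_left (abs_nonneg _))⟩
  refine ⟨⌈b - a⌉, q ∘ σ, fun i hi j hj => ?_, by simp [σ, hab], ?_, fun s ⟨has, hsb⟩ => ?_⟩
  · obtain ⟨hlow, hup⟩ := hσdist i hi j hj
    obtain ⟨hqlow, hqup⟩ := hq _ (hσ i hi) _ (hσ j hj)
    have hμ' : (dist i j - 1) / μ ≤ dist (σ i) (σ j) / μ := by gcongr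
    have : 1 / μ ≤ 1 := (div_le_one (by linarith)).mpr hμ
    constructor
    · rw [sub_div] at hμ'
      simp only [Function.comp_apply]
      linarith
    · simp only [Function.comp_apply]
      nlinarith
  · simp only [Function.comp_apply, σ]
    rw [min_eq_right (by linarith)]
  · have hi : ⌊s - a⌋ ∈ Set.Icc 0 ⌈b - a⌉ :=
      ⟨Int.floor_nonneg.mpr (by linarith),
        (Int.floor_mono (by linarith)).trans (Int.floor_le_ceil _)⟩
    refine ⟨⌊s - a⌋, hi, ?_⟩
    have hfl : (⌊s - a⌋ : ℝ) ≤ s - a ∧ s - a < ⌊s - a⌋ + 1 :=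
      ⟨Int.floor_le _, Int.lt_floor_add_one _⟩
    have hσs : σ ⌊s - a⌋ = a + ⌊s - a⌋ := min_eq_left (by linarith)
    have hclose := (hq s ⟨has, hsb⟩ (σ ⌊s - a⌋) (hσ _ hi)).2
    rw [hσs, Real.dist_eq, abs_of_nonneg (by linarith)] at hclose
    simp only [Function.comp_apply, hσs]
    nlinarith

end QuasiGeodesic

/-- if a subgroup `H` of a finitely generated group `G` has the superlinear
divergence property (w.r.t. the word metric `d` of the finite generating set `S`), then
for all `μ ≥ 1`, `c ≥ 0` there is `C ≥ 0` such that every `(μ,c)`-quasi-geodesic (defined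
on an interval of `ℝ` or of `ℤ`) with endpoints in `H` is contained in the closed
`C`-neighbourhood of `H`. -/
theorem quasiconvex_of_superlinear_divergence
    {G : Type*} [Group G]
    (S : Finset G) (hS : Subgroup.closure (S : Set G) = ⊤)
    (H : Subgroup G)
    (hdiv : ∀ L : ℝ, 0 ≤ L → ∃ K : ℝ, 0 ≤ K ∧
      ∀ h₁ ∈ H, ∀ h₂ ∈ H, ∀ r₁ r₂ : ℝ, 0 < r₁ → r₁ < r₂ →
        r₂ < (wordDist (S : Set G) h₁ h₂ : ℝ) →
      ∀ (m n : ℤ), m ≤ n → ∀ α : ℤ → G, α m = h₁ → α n = h₂ →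
        (∀ i : ℤ, m ≤ i → i < n → (wordDist (S : Set G) (α i) (α (i + 1)) : ℝ) ≤ 1) →
        (∀ i : ℤ, m ≤ i → i ≤ n → ∀ h ∈ H,
          r₁ ≤ (wordDist (S : Set G) h₁ h : ℝ) → (wordDist (S : Set G) h₁ h : ℝ) ≤ r₂ →
          ¬ (wordDist (S : Set G) (α i) h : ℝ) ≤ K) →
        L * (r₂ - r₁) ≤
          ∑ i ∈ Finset.Ico m n, (wordDist (S : Set G) (α i) (α (i + 1)) : ℝ)) :
    ∀ μ c : ℝ, 1 ≤ μ → 0 ≤ c → ∃ C : ℝ, 0 ≤ C ∧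
      -- quasi-geodesics defined on intervals of ℝ
      ((∀ a b : ℝ, a ≤ b → ∀ q : ℝ → G,
        (∀ s ∈ Set.Icc a b, ∀ t ∈ Set.Icc a b,
          |s - t| / μ - c ≤ (wordDist (S : Set G) (q s) (q t) : ℝ) ∧
          (wordDist (S : Set G) (q s) (q t) : ℝ) ≤ μ * |s - t| + c) →
        q a ∈ H → q b ∈ H →
        ∀ s ∈ Set.Icc a b, ∃ h ∈ H, (wordDist (S : Set G) (q s) h : ℝ) ≤ C) ∧
      -- quasi-geodesics defined on intervals of ℤ
      (∀ m n : ℤ, m ≤ n → ∀ q : ℤ → G,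
        (∀ s ∈ Set.Icc m n, ∀ t ∈ Set.Icc m n,
          |(s : ℝ) - (t : ℝ)| / μ - c ≤ (wordDist (S : Set G) (q s) (q t) : ℝ) ∧
          (wordDist (S : Set G) (q s) (q t) : ℝ) ≤ μ * |(s : ℝ) - (t : ℝ)| + c) →
        q m ∈ H → q n ∈ H →
        ∀ s ∈ Set.Icc m n, ∃ h ∈ H, (wordDist (S : Set G) (q s) h : ℝ) ≤ C)) := by
  intro μ c hμ hc
  obtain ⟨C₁, hC₁, hint⟩ := quasiconvex_int_of_divergesAtRate hS hdiv hμ hc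
  obtain ⟨C₂, hC₂, hsampled⟩ :=
    quasiconvex_int_of_divergesAtRate hS hdiv hμ (by linarith : 0 ≤ c + 1)
  refine ⟨max C₁ (C₂ + μ + c), by positivity, fun a b hab q hq hqa hqb s hs => ?_,
    fun m n _ q hq hqm hqn s hs => ?_⟩
  · obtain ⟨n, p, hp, hp0, hpn, hclose⟩ := IsQuasiGeodesicOn.exists_int_sample hμ hab hq
    obtain ⟨i, hi, hsi⟩ := hclose s hs
    obtain ⟨h, hh, hih⟩ := hsampled 0 n p hp (hp0 ▸ hqa) (hpn ▸ hqb) i hi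
    exact ⟨h, hh, by linarith [wordDist_triangle hS (q s) (p i) h, le_max_right C₁ (C₂ + μ + c)]⟩
  · obtain ⟨h, hh, hsh⟩ := hint m n q hq hqm hqn s hs
    exact ⟨h, hh, hsh.trans (le_max_left _ _)⟩
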